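/- The sequence a_n := 2·(n+1)/(n−1) · ∑_{j=1}^{n−1} (H_{j,1}² + H_{j,2}) / ((j+1)(j+2)), defined for integers n ≥ 2, is nondecreasing and converges as n → ∞ to 2π²/3. -/

import Mathlib

open Filter

/-- The `n`-th harmonic number `H_{n,1}`. -/
noncomputable def harm (n : ℕ) : ℝ := ∑ k ∈ Finset.Icc 1 n, 1 / (k : ℝ)

/-- The generalized harmonic number `H_{n,2}`. -/
noncomputable def harm2 (n : ℕ) : ℝ := ∑ k ∈ Finset.Icc 1 n, 1 / (k : ℝ) ^ 2

/-- `a_n = E[(U^{(n)} − τ^{(n)})²]`, the second moment of the time since coalescence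
of a random pair of tips of a Yule tree with `n` tips. -/
noncomputable def aSeq (n : ℕ) : ℝ :=
  2 * ((n : ℝ) + 1) / ((n : ℝ) - 1) *
    ∑ j ∈ Finset.Icc 1 (n - 1), ((harm j) ^ 2 + harm2 j) / (((j : ℝ) + 1) * ((j : ℝ) + 2))

/-!
The partial sums telescope: `∑_{j ≤ m} (H_j² + H_{j,2}) / ((j+1)(j+2))` equals
`2 H_{m,2} - (H_m² + H_{m,2}) / (m+2) - 2 H_m / (m+1)`, which gives a closed form for `a_{m+1}`.
With `G := harmGap` one then finds `a_{m+2} - a_{m+1} = 2 G_{m+1} / (m (m+1))`, and `G_k ≥ 0`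
because `G_0 = 0` and `G` is nondecreasing. For the limit, `H_{m,2} → π²/6` while
`H_m ≤ 1 + log m` makes the other two terms of the closed form vanish.
-/

open Real

lemma harm_succ (n : ℕ) : harm (n + 1) = harm n + 1 / ((n : ℝ) + 1) := by
  rw [harm, harm, Finset.sum_Icc_succ_top (Nat.le_add_left 1 n)]
  push_cast
  ring

lemma harm2_succ (n : ℕ) : harm2 (n + 1) = harm2 n + 1 / ((n : ℝ) + 1) ^ 2 := by
  rw [harm2, harm2, Finset.sum_Icc_succ_top (Nat.le_add_left 1 n)]
  push_cast
  ring

lemma harm_nonneg (n : ℕ) : 0 ≤ harm n :=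
  Finset.sum_nonneg fun _ _ => by positivity

lemma harm_le_one_add_log (n : ℕ) : harm n ≤ 1 + log n := by
  have harm_eq_harmonic : harm n = (harmonic n : ℝ) := by
    rw [harm, harmonic_eq_sum_Icc]
    push_cast [one_div]
    rfl
  exact harm_eq_harmonic ▸ harmonic_le_one_add_log n

lemma harm2_eq_sum_range (n : ℕ) : harm2 n = ∑ k ∈ Finset.range (n + 1), 1 / (k : ℝ) ^ 2 := by
  induction n with
  | zero => simp [harm2]
  | succ n ih =>
    rw [Finset.sum_range_succ, ← ih, harm2_succ]
    push_cast
    ring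

lemma tendsto_harm2 : Tendsto harm2 atTop (nhds (π ^ 2 / 6)) := by
  have := hasSum_zeta_two.tendsto_sum_nat.comp (tendsto_add_atTop_nat 1)
  simpa only [Function.comp_def, ← harm2_eq_sum_range] using this

lemma tendsto_one_add_log_pow_div_add (k : ℕ) (c : ℝ) :
    Tendsto (fun x : ℝ => (1 + log x) ^ k / (x + c)) atTop (nhds 0) := by
  have := (tendsto_pow_log_div_mul_add_atTop (exp 1)⁻¹ c k (by positivity)).comp
    (tendsto_id.const_mul_atTop (exp_pos 1))
  refine this.congr' ?_
  filter_upwards [eventually_gt_atTop 0] with x hx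
  -- `1 + log x = log (e x)`
  simp [log_mul (exp_pos 1).ne' hx.ne']

lemma tendsto_harm_pow_div_add (k : ℕ) {c : ℝ} (hc : 0 ≤ c) :
    Tendsto (fun m : ℕ => harm m ^ k / (m + c)) atTop (nhds 0) := by
  refine squeeze_zero (fun m => by have := harm_nonneg m; positivity) (fun m => ?_)
    ((tendsto_one_add_log_pow_div_add k c).comp tendsto_natCast_atTop_atTop)
  have := harm_nonneg m
  have := harm_le_one_add_log m
  simp only [Function.comp_apply]
  gcongr

lemma sum_Icc_harm_sq_add_harm2_div (m : ℕ) :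
    ∑ j ∈ Finset.Icc 1 m, (harm j ^ 2 + harm2 j) / (((j : ℝ) + 1) * ((j : ℝ) + 2))
      = 2 * harm2 m - (harm m ^ 2 + harm2 m) / ((m : ℝ) + 2) - 2 * harm m / ((m : ℝ) + 1) := by
  induction m with
  | zero => simp [harm, harm2]
  | succ n ih =>
    rw [Finset.sum_Icc_succ_top (Nat.le_add_left 1 n), ih, harm_succ, harm2_succ]
    push_cast
    field_simp
    ring

lemma aSeq_succ (m : ℕ) :
    aSeq (m + 1) = 2 * ((m : ℝ) + 2) / m *
      (2 * harm2 m - (harm m ^ 2 + harm2 m) / ((m : ℝ) + 2) - 2 * harm m / ((m : ℝ) + 1)) := by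
  rw [aSeq, Nat.add_sub_cancel, sum_Icc_harm_sq_add_harm2_div]
  push_cast
  ring_nf

noncomputable def harmGap (k : ℕ) : ℝ := harm k ^ 2 + 4 * harm k / ((k : ℝ) + 1) - 3 * harm2 k

lemma harmGap_succ_sub (m : ℕ) :
    harmGap (m + 1) - harmGap m
      = 2 * m * (harm m * (m + 1) + 1) / (((m : ℝ) + 1) ^ 2 * ((m : ℝ) + 2)) := by
  rw [harmGap, harmGap, harm_succ, harm2_succ]
  push_cast
  field_simp
  ring

lemma harmGap_nonneg (k : ℕ) : 0 ≤ harmGap k := by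
  induction k with
  | zero => simp [harmGap, harm, harm2]
  | succ m ih =>
    have : 0 ≤ harmGap (m + 1) - harmGap m := by
      rw [harmGap_succ_sub]
      have := harm_nonneg m
      positivity
    linarith

lemma aSeq_succ_succ_sub {m : ℕ} (hm : m ≠ 0) :
    aSeq (m + 2) - aSeq (m + 1) = 2 * harmGap (m + 1) / (m * ((m : ℝ) + 1)) := by
  have hm' : (m : ℝ) ≠ 0 := Nat.cast_ne_zero.mpr hm
  rw [aSeq_succ, aSeq_succ, harmGap, harm_succ, harm2_succ]
  push_cast
  field_simp
  ring

lemma aSeq_le_aSeq_succ {n : ℕ} (hn : 2 ≤ n) : aSeq n ≤ aSeq (n + 1) := by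
  obtain ⟨m, rfl⟩ : ∃ m, n = m + 1 := ⟨n - 1, by omega⟩
  have hdiff := aSeq_succ_succ_sub (m := m) (by omega)
  have := harmGap_nonneg (m + 1)
  have : 0 ≤ 2 * harmGap (m + 1) / (m * ((m : ℝ) + 1)) := by positivity
  linarith

lemma tendsto_aSeq : Tendsto aSeq atTop (nhds (2 * π ^ 2 / 3)) := by
  rw [← tendsto_add_atTop_iff_nat 1]
  simp only [aSeq_succ]
  have hfactor : Tendsto (fun m : ℕ => 2 * ((m : ℝ) + 2) / m) atTop (nhds 2) := by
    have := (tendsto_const_div_atTop_nhds_zero_nat (4 : ℝ)).const_add 2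
    rw [add_zero] at this
    refine this.congr' ?_
    filter_upwards [eventually_ne_atTop 0] with m hm
    field_simp
    ring
  have hsq := tendsto_harm_pow_div_add 2 (c := 2) (by norm_num)
  have hlin := tendsto_harm_pow_div_add 1 (c := 1) (by norm_num)
  have hK : Tendsto (fun m : ℕ => harm2 m / ((m : ℝ) + 2)) atTop (nhds 0) :=
    tendsto_harm2.div_atTop (tendsto_atTop_add_const_right _ 2 tendsto_natCast_atTop_atTop)
  have := hfactor.mul (((tendsto_harm2.const_mul 2).sub (hsq.add hK)).sub (hlin.const_mul 2))
  convert this using 2 with m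
  · simp only [add_div, pow_one, mul_div_assoc]
  · ring

/-- `a_n` is nondecreasing (for `n ≥ 2`) and converges to `2π²/3`. -/
theorem stmt12 :
    (∀ n : ℕ, 2 ≤ n → aSeq n ≤ aSeq (n + 1)) ∧
    Tendsto aSeq atTop (nhds (2 * Real.pi ^ 2 / 3)) :=
  ⟨fun _ => aSeq_le_aSeq_succ, tendsto_aSeq⟩
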